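/- arXiv:2301.03230 — 5 statements merged into one kernel-verified Lean document; each statement's English description precedes it below -/
import Mathlib

section
/- For the simplicial network G_q(g) (q ≥ 1, g ≥ 0), the number of nodes is N_{g,q} = (2/(q+3)) · ((q+1)(q+2)/2)^{g+1} + 2(q+2)/(q+3). -/
/-- Edge corona product `G ⊛ K_q`: keep `G`, and for each edge of `G` add a fresh
copy of the complete graph on `q` vertices, joining all its vertices to both
endpoints of the edge. -/
def edgeCorona {V : Type} (G : SimpleGraph V) (q : ℕ) :
    SimpleGraph (V ⊕ (G.edgeSet × Fin q)) where
  Adj := fun x y => match x, y with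
    | Sum.inl u, Sum.inl v => G.Adj u v
    | Sum.inl u, Sum.inr p => u ∈ (p.1 : Sym2 V)
    | Sum.inr p, Sum.inl v => v ∈ (p.1 : Sym2 V)
    | Sum.inr p, Sum.inr r => p.1 = r.1 ∧ p.2 ≠ r.2
  symm := by
    constructor
    rintro (u | p) (v | r) h
    · exact G.adj_symm h
    · exact h
    · exact h
    · exact ⟨h.1.symm, h.2.symm⟩
  loopless := by
    constructor
    rintro (u | p) h
    · exact G.irrefl h
    · exact h.2 rfl

/-- The simplicial network `G_q(g)` together with its vertex type:
`G_q(0) = K_{q+2}` and `G_q(g+1) = G_q(g) ⊛ K_q`. -/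
def Gaux (q : ℕ) : ℕ → Σ V : Type, SimpleGraph V
  | 0 => ⟨Fin (q + 2), ⊤⟩
  | g + 1 => ⟨_, edgeCorona (Gaux q g).2 q⟩

abbrev GVert (q g : ℕ) : Type := (Gaux q g).1

abbrev Gnet (q g : ℕ) : SimpleGraph (GVert q g) := (Gaux q g).2

/-- The `q+2` hub nodes of `G_q(g)`: the vertices present from iteration `0`. -/
def hub (q : ℕ) : (g : ℕ) → Fin (q + 2) → GVert q g
  | 0 => id
  | g + 1 => fun k => Sum.inl (hub q g k)

/-!
Every edge of `G_q(g)` spawns `q` new nodes and is replaced by `1 + 2q + q(q-1)/2 = (q+1)(q+2)/2`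
edges of `G_q(g+1)`, so `M_{g,q} = ((q+1)(q+2)/2)^{g+1}` by induction from the `(q+2)(q+1)/2`
edges of `K_{q+2}`. Then `N_{g+1,q} = N_{g,q} + q M_{g,q}` telescopes to a geometric sum, and
`q / ((q+1)(q+2)/2 - 1) = 2 / (q+3)` gives the closed form.
-/

instance GVert.finite (q : ℕ) : ∀ g, Finite (GVert q g)
  | 0 => inferInstanceAs (Finite (Fin (q + 2)))
  | g + 1 =>
      haveI := GVert.finite q g
      inferInstanceAs (Finite ((Gaux q g).1 ⊕ ((Gaux q g).2.edgeSet × Fin q)))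

lemma card_ne_pairs_add_card {α : Type} [Finite α] :
    Nat.card {y : α × α // y.1 ≠ y.2} + Nat.card α = Nat.card α * Nat.card α := by
  classical
  let diag : {y : α × α // y.1 = y.2} ≃ α :=
    { toFun := fun y => y.1.1
      invFun := fun a => ⟨(a, a), rfl⟩
      left_inv := fun y => Subtype.ext (Prod.ext rfl y.2)
      right_inv := fun _ => rfl }
  rw [← Nat.card_prod, ← Nat.card_congr (Equiv.sumCompl fun y : α × α => y.1 = y.2), Nat.card_sum,
    Nat.card_congr diag, add_comm]

lemma Sym2.card_mem_of_not_isDiag {V : Type} {s : Sym2 V} (hs : ¬ s.IsDiag) :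
    Nat.card {v : V // v ∈ s} = 2 := by
  induction s with
  | _ a b =>
    let e : {v : V // v ∈ s(a, b)} ≃ ({a, b} : Set V) :=
      Equiv.subtypeEquivRight fun v => by simp [Sym2.mem_iff]
    rw [Nat.card_congr e, Nat.card_coe_set_eq, Set.ncard_pair (by simpa using hs)]

namespace SimpleGraph

variable {V : Type}

lemma card_adj_pairs [Finite V] (G : SimpleGraph V) :
    Nat.card {p : V × V // G.Adj p.1 p.2} = 2 * Nat.card G.edgeSet := by
  classical
  have := Fintype.ofFinite V
  let e : {p : V × V // G.Adj p.1 p.2} ≃ G.Dart :=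
    { toFun := fun p => ⟨p.1, p.2⟩
      invFun := fun d => ⟨d.toProd, d.adj⟩
      left_inv := fun _ => rfl
      right_inv := fun _ => rfl }
  rw [Nat.card_congr e, Nat.card_eq_fintype_card, G.dart_card_eq_twice_card_edges,
    ← coe_edgeFinset, Nat.card_coe_set_eq, Set.ncard_coe_finset]

lemma card_edgeSet_top [Finite V] :
    Nat.card (⊤ : SimpleGraph V).edgeSet = (Nat.card V).choose 2 := by
  classical
  have := Fintype.ofFinite V
  rw [Nat.card_eq_fintype_card, ← edgeFinset_card, card_edgeFinset_top_eq_card_choose_two,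
    Nat.card_eq_fintype_card]

end SimpleGraph

namespace edgeCorona

variable {V : Type} (G : SimpleGraph V) (q : ℕ)

def adjPairsEquiv :
    {p : (V ⊕ (G.edgeSet × Fin q)) × (V ⊕ (G.edgeSet × Fin q)) //
        (edgeCorona G q).Adj p.1 p.2} ≃
      {p : V × V // G.Adj p.1 p.2} ⊕
        {x : (G.edgeSet × Fin q) × V // x.2 ∈ (x.1.1 : Sym2 V)} ⊕
        {x : (G.edgeSet × Fin q) × V // x.2 ∈ (x.1.1 : Sym2 V)} ⊕
        {x : (G.edgeSet × Fin q) × (G.edgeSet × Fin q) // x.1.1 = x.2.1 ∧ x.1.2 ≠ x.2.2} where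
  toFun
    | ⟨(.inl u, .inl v), h⟩ => .inl ⟨(u, v), h⟩
    | ⟨(.inl u, .inr p), h⟩ => .inr (.inl ⟨(p, u), h⟩)
    | ⟨(.inr p, .inl v), h⟩ => .inr (.inr (.inl ⟨(p, v), h⟩))
    | ⟨(.inr p, .inr r), h⟩ => .inr (.inr (.inr ⟨(p, r), h⟩))
  invFun
    | .inl ⟨(u, v), h⟩ => ⟨(.inl u, .inl v), h⟩
    | .inr (.inl ⟨(p, u), h⟩) => ⟨(.inl u, .inr p), h⟩
    | .inr (.inr (.inl ⟨(p, v), h⟩)) => ⟨(.inr p, .inl v), h⟩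
    | .inr (.inr (.inr ⟨(p, r), h⟩)) => ⟨(.inr p, .inr r), h⟩
  left_inv := by rintro ⟨⟨u | p, v | r⟩, h⟩ <;> rfl
  right_inv := by
    rintro (⟨⟨u, v⟩, h⟩ | ⟨⟨p, u⟩, h⟩ | ⟨⟨p, v⟩, h⟩ | ⟨⟨p, r⟩, h⟩) <;> rfl

def sameCopyPairsEquiv :
    {x : (G.edgeSet × Fin q) × (G.edgeSet × Fin q) // x.1.1 = x.2.1 ∧ x.1.2 ≠ x.2.2} ≃
      G.edgeSet × {y : Fin q × Fin q // y.1 ≠ y.2} where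
  toFun := fun ⟨((e, i), (_, j)), h⟩ => (e, ⟨(i, j), h.2⟩)
  invFun := fun (e, ⟨(i, j), h⟩) => ⟨((e, i), (e, j)), rfl, h⟩
  left_inv := by
    rintro ⟨⟨⟨e, i⟩, ⟨f, j⟩⟩, rfl : e = f, h⟩
    rfl
  right_inv := fun _ => rfl

lemma card_incidence_pairs [Finite V] :
    Nat.card {x : (G.edgeSet × Fin q) × V // x.2 ∈ (x.1.1 : Sym2 V)} =
      2 * (q * Nat.card G.edgeSet) := by
  have := Fintype.ofFinite (G.edgeSet × Fin q)
  have fiber (p : G.edgeSet × Fin q) : Nat.card {v : V // v ∈ (p.1 : Sym2 V)} = 2 :=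
    Sym2.card_mem_of_not_isDiag (G.not_isDiag_of_mem_edgeSet p.1.2)
  rw [Nat.card_congr
      (Equiv.subtypeProdEquivSigmaSubtype fun (p : G.edgeSet × Fin q) v => v ∈ (p.1 : Sym2 V)),
    Nat.card_sigma, Finset.sum_congr rfl fun p _ => fiber p, Finset.sum_const, Finset.card_univ,
    ← Nat.card_eq_fintype_card, Nat.card_prod, Nat.card_fin, smul_eq_mul]
  ring

/-- Each edge of `G` survives and brings `2q` edges to its copy of `K_q` plus the `q(q-1)/2`
edges of that copy; the count runs over ordered pairs, which split along the summands of the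
vertex type. -/
lemma two_mul_card_edgeSet [Finite V] :
    2 * Nat.card (edgeCorona G q).edgeSet = (q + 1) * (q + 2) * Nat.card G.edgeSet := by
  have h := card_ne_pairs_add_card (α := Fin q)
  rw [Nat.card_fin] at h
  rw [← SimpleGraph.card_adj_pairs, Nat.card_congr (adjPairsEquiv G q), Nat.card_sum, Nat.card_sum,
    Nat.card_sum, Nat.card_congr (sameCopyPairsEquiv G q), Nat.card_prod, card_incidence_pairs,
    SimpleGraph.card_adj_pairs]
  zify at h ⊢
  linear_combination (Nat.card G.edgeSet : ℤ) * h

end edgeCorona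

lemma card_edgeSet_gnet (q g : ℕ) :
    (Nat.card (Gnet q g).edgeSet : ℚ) = (((q : ℚ) + 1) * ((q : ℚ) + 2) / 2) ^ (g + 1) := by
  induction g with
  | zero =>
    change (Nat.card (⊤ : SimpleGraph (Fin (q + 2))).edgeSet : ℚ) = _
    rw [SimpleGraph.card_edgeSet_top, Nat.card_fin, Nat.cast_choose_two]
    push_cast
    ring
  | succ g ih =>
    have h := congrArg (Nat.cast : ℕ → ℚ) (edgeCorona.two_mul_card_edgeSet (Gnet q g) q)
    push_cast at h
    change (Nat.card (edgeCorona (Gnet q g) q).edgeSet : ℚ) = _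
    rw [pow_succ, ← ih]
    linarith

lemma card_gvert_succ (q g : ℕ) :
    Nat.card (GVert q (g + 1)) = Nat.card (GVert q g) + q * Nat.card (Gnet q g).edgeSet := by
  change Nat.card (GVert q g ⊕ ((Gnet q g).edgeSet × Fin q)) = _
  rw [Nat.card_sum, Nat.card_prod, Nat.card_fin, mul_comm]

theorem node_count_general (q g : ℕ) :
    (Nat.card (GVert q g) : ℚ) =
      2 / (q + 3) * (((q : ℚ) + 1) * ((q : ℚ) + 2) / 2) ^ (g + 1)
        + 2 * ((q : ℚ) + 2) / ((q : ℚ) + 3) := by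
  induction g with
  | zero =>
    rw [show GVert q 0 = Fin (q + 2) from rfl, Nat.card_fin]
    field_simp
    push_cast
    ring
  | succ g ih =>
    rw [card_gvert_succ, Nat.cast_add, Nat.cast_mul, ih, card_edgeSet_gnet]
    field_simp
    ring

/-- The number of nodes of `G_q(g)` is
`N_{g,q} = (2/(q+3)) · ((q+1)(q+2)/2)^{g+1} + 2(q+2)/(q+3)`. -/
theorem node_count (q g : ℕ) (hq : 1 ≤ q) :
    (Nat.card (GVert q g) : ℚ) =
      2 / (q + 3) * (((q : ℚ) + 1) * ((q : ℚ) + 2) / 2) ^ (g + 1)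
        + 2 * ((q : ℚ) + 2) / ((q : ℚ) + 3) :=
  node_count_general q g
end

section
/- If the sequences N_g and M_g satisfy N_0 = q+2, M_0 = (q+1)(q+2)/2, M_{g+1} = ((q+1)(q+2)/2)·M_g, and N_{g+1} = q·M_g + N_g, then the average degree 2M_g/N_g tends to q+3 as g → ∞. -/
/-! The edge counts grow geometrically with ratio `r = (q+1)(q+2)/2 > 1`, while the two
recurrences conserve `(r - 1) N_g - q M_g`; evaluated at `g = 0` this says
`(q+3) N_g = 2 M_g + 2(q+2)`. Hence `2 M_g / N_g = (q+3) · M_g / (M_g + q + 2) → q + 3`. -/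

open Filter Topology

theorem sub_one_mul_sub_mul_eq_of_recurrence {R : Type*} [CommRing R] {a r : R}
    {M N : ℕ → R} (hM : ∀ g, M (g + 1) = r * M g) (hN : ∀ g, N (g + 1) = a * M g + N g)
    (g : ℕ) : (r - 1) * N g - a * M g = (r - 1) * N 0 - a * M 0 := by
  induction g with
  | zero => rfl
  | succ g ih => rw [← ih, hM, hN]; ring

theorem tendsto_div_add_const_atTop {𝕜 : Type*} [Field 𝕜] [LinearOrder 𝕜]
    [IsStrictOrderedRing 𝕜] [TopologicalSpace 𝕜] [OrderTopology 𝕜] (c : 𝕜) :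
    Tendsto (fun x => x / (x + c)) atTop (𝓝 1) := by
  have hc : Tendsto (fun x => c / (x + c)) atTop (𝓝 0) :=
    (tendsto_atTop_add_const_right _ c tendsto_id).const_div_atTop c
  have hpos : ∀ᶠ x in atTop, x + c ≠ 0 :=
    (eventually_gt_atTop (-c)).mono fun x hx => by linarith
  simpa using (tendsto_const_nhds.sub hc).congr' <| hpos.mono fun x hx => by
    field_simp
    ring

/-- If `N₀ = q+2`, `M₀ = (q+1)(q+2)/2`, `M_{g+1} = ((q+1)(q+2)/2)·M_g` and
`N_{g+1} = q·M_g + N_g`, then the average degree `2M_g/N_g → q+3` as `g → ∞`. -/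
theorem average_degree_tendsto (q : ℕ) (hq : 1 ≤ q) (N M : ℕ → ℝ)
    (hN0 : N 0 = (q : ℝ) + 2)
    (hM0 : M 0 = ((q : ℝ) + 1) * ((q : ℝ) + 2) / 2)
    (hM : ∀ g, M (g + 1) = (((q : ℝ) + 1) * ((q : ℝ) + 2) / 2) * M g)
    (hN : ∀ g, N (g + 1) = (q : ℝ) * M g + N g) :
    Filter.Tendsto (fun g => 2 * M g / N g) Filter.atTop (nhds ((q : ℝ) + 3)) := by
  have hq' : (1 : ℝ) ≤ q := by exact_mod_cast hq
  have hM_top : Tendsto M atTop atTop :=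
    tendsto_atTop_of_geom_le (by rw [hM0]; positivity) (by nlinarith) fun g => (hM g).ge
  have hN_eq (g : ℕ) : ((q : ℝ) + 3) * N g = 2 * (M g + (q + 2)) := by
    have h := sub_one_mul_sub_mul_eq_of_recurrence hM hN g
    rw [hN0, hM0] at h
    refine mul_left_cancel₀ (by positivity : (q : ℝ) ≠ 0) ?_
    linear_combination 2 * h
  have hratio : (fun g => ((q : ℝ) + 3) * (M g / (M g + (q + 2)))) =ᶠ[atTop]
      fun g => 2 * M g / N g :=
    (hM_top.eventually_gt_atTop 0).mono fun g hg => by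
      rw [eq_div_iff (by nlinarith [hN_eq g]), mul_right_comm, hN_eq g]
      field_simp
  simpa using (((tendsto_div_add_const_atTop _).comp hM_top).const_mul _).congr' hratio
end

section
/- The domination number of G_q(1) equals q+1, and every (q+1)-element subset of the set of q+2 hub nodes (the vertices of the initial complete graph K_{q+2}) is a minimum dominating set of G_q(1). -/
/-- `D` is a dominating set: every vertex not in `D` has a neighbor in `D`. -/
def IsDominatingSet {V : Type} (G : SimpleGraph V) (D : Finset V) : Prop :=
  ∀ v ∉ D, ∃ u ∈ D, G.Adj u v

/-- The domination number: the least cardinality of a dominating set. -/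
noncomputable def domNum {V : Type} (G : SimpleGraph V) : ℕ :=
  sInf {n | ∃ D : Finset V, IsDominatingSet G D ∧ D.card = n}

lemma domNum_eq_card_of_isDominatingSet {V : Type} {G : SimpleGraph V} {D : Finset V}
    (hD : IsDominatingSet G D) (hmin : ∀ D', IsDominatingSet G D' → D.card ≤ D'.card) :
    domNum G = D.card :=
  le_antisymm (Nat.sInf_le ⟨D, hD, rfl⟩) (le_csInf ⟨D.card, D, hD, rfl⟩ (by
    rintro _ ⟨D', hD', rfl⟩
    exact hmin D' hD'))

namespace edgeCorona

section

variable {V : Type} {G : SimpleGraph V} {q : ℕ}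

lemma isDominatingSet_of_forall_adj {D : Finset (V ⊕ (G.edgeSet × Fin q))}
    (hG : ∀ v, ∃ u, G.Adj u v)
    (hcover : ∀ ⦃a b⦄, G.Adj a b → Sum.inl a ∈ D ∨ Sum.inl b ∈ D) :
    IsDominatingSet (edgeCorona G q) D := by
  rintro (v | ⟨⟨e, he⟩, i⟩) hv
  · obtain ⟨u, huv⟩ := hG v
    exact ⟨Sum.inl u, (hcover huv).resolve_right hv, huv⟩
  · induction e using Sym2.ind with
    | _ a b =>
      rcases hcover he with ha | hb
      · exact ⟨Sum.inl a, ha, Sym2.mem_mk_left a b⟩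
      · exact ⟨Sum.inl b, hb, Sym2.mem_mk_right a b⟩

lemma exists_inr_mem_of_isDominatingSet (hq : 1 ≤ q) {D : Finset (V ⊕ (G.edgeSet × Fin q))}
    (hD : IsDominatingSet (edgeCorona G q) D) {e : G.edgeSet}
    (he : ∀ v ∈ (e : Sym2 V), Sum.inl v ∉ D) : ∃ i, Sum.inr (e, i) ∈ D := by
  by_cases h0 : Sum.inr (e, ⟨0, hq⟩) ∈ D
  · exact ⟨_, h0⟩
  obtain ⟨u | ⟨e', i⟩, hu, hadj⟩ := hD _ h0
  · exact absurd hu (he u hadj)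
  · obtain ⟨rfl, -⟩ := hadj
    exact ⟨i, hu⟩

end

section top

variable {V : Type} [Fintype V] {q : ℕ}
  {D : Finset (V ⊕ ((⊤ : SimpleGraph V).edgeSet × Fin q))}

lemma inl_mem_or_inl_mem_of_card_le (hD : D.toRight = ∅)
    (hcard : Fintype.card V ≤ D.card + 1) {a b : V} (hab : a ≠ b) :
    Sum.inl a ∈ D ∨ Sum.inl b ∈ D := by
  classical
  by_contra! h
  have hleft : D.toLeft ⊆ (Finset.univ.erase a).erase b := fun v hv => by
    have hv : Sum.inl v ∈ D := Finset.mem_toLeft.mp hv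
    simp only [Finset.mem_erase, Finset.mem_univ, and_true]
    exact ⟨fun hvb => h.2 (hvb ▸ hv), fun hva => h.1 (hva ▸ hv)⟩
  have := Finset.card_le_card hleft
  rw [Finset.card_erase_of_mem (by simpa using hab.symm), Finset.card_erase_of_mem
    (Finset.mem_univ a), Finset.card_univ] at this
  have := D.card_toLeft_add_card_toRight
  rw [hD, Finset.card_empty] at this
  have := Fintype.one_lt_card_iff.mpr ⟨a, b, hab⟩
  omega

lemma isDominatingSet_top_of_toRight_eq_empty [Nontrivial V] (hD : D.toRight = ∅)
    (hcard : Fintype.card V ≤ D.card + 1) : IsDominatingSet (edgeCorona ⊤ q) D :=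
  isDominatingSet_of_forall_adj exists_ne
    fun _ _ hab => inl_mem_or_inl_mem_of_card_le hD hcard hab

lemma card_le_card_add_one_of_isDominatingSet (hq : 1 ≤ q)
    (hD : IsDominatingSet (edgeCorona ⊤ q) D) : Fintype.card V ≤ D.card + 1 := by
  classical
  have hsplit := D.card_toLeft_add_card_toRight
  by_cases hall : D.toLeftᶜ = ∅
  · have := Finset.card_compl D.toLeft
    rw [hall, Finset.card_empty] at this
    omega
  obtain ⟨b, hb⟩ := Finset.nonempty_iff_ne_empty.mpr hall
  have hstar : ((D.toLeftᶜ).erase b).image (fun x => s(b, x)) ⊆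
      D.toRight.image (fun p => (p.1 : Sym2 V)) := by
    intro z hz
    obtain ⟨x, hx, rfl⟩ := Finset.mem_image.mp hz
    obtain ⟨hxb, hx⟩ := Finset.mem_erase.mp hx
    have hout : ∀ v ∈ s(b, x), Sum.inl v ∉ D := by
      intro v hv
      rw [← Finset.mem_toLeft, ← Finset.mem_compl]
      rcases Sym2.mem_iff.mp hv with rfl | rfl
      exacts [hb, hx]
    obtain ⟨i, hi⟩ := exists_inr_mem_of_isDominatingSet hq hD
      (e := ⟨s(b, x), by simpa using hxb.symm⟩) hout
    exact Finset.mem_image.mpr ⟨_, Finset.mem_toRight.mpr hi, rfl⟩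
  have hcard := (Finset.card_le_card hstar).trans Finset.card_image_le
  rw [Finset.card_image_of_injective _ fun _ _ => Sym2.congr_right.mp,
    Finset.card_erase_of_mem hb, Finset.card_compl] at hcard
  have := D.toLeft.card_le_univ
  omega

variable [Nontrivial V]

lemma domNum_top_add_one (hq : 1 ≤ q) :
    domNum (edgeCorona (⊤ : SimpleGraph V) q) + 1 = Fintype.card V := by
  classical
  obtain ⟨c⟩ : Nonempty V := inferInstance
  set D₀ : Finset (V ⊕ ((⊤ : SimpleGraph V).edgeSet × Fin q)) :=
    (Finset.univ.erase c).map Function.Embedding.inl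
  have hcard : D₀.card + 1 = Fintype.card V := by
    rw [Finset.card_map, Finset.card_erase_of_mem (Finset.mem_univ c), Finset.card_univ]
    have := Fintype.card_pos (α := V)
    omega
  have hD₀ : IsDominatingSet (edgeCorona ⊤ q) D₀ :=
    isDominatingSet_top_of_toRight_eq_empty (by ext; simp [D₀]) hcard.ge
  rw [domNum_eq_card_of_isDominatingSet hD₀ fun D' hD' => by
    have := card_le_card_add_one_of_isDominatingSet hq hD'
    omega, hcard]

end top

end edgeCorona

/-- The domination number of `G_q(1)` is `q+1`, and every `(q+1)`-element subset
of the hub node set is a minimum dominating set of `G_q(1)`. -/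
theorem domNum_Gnet_one (q : ℕ) (hq : 1 ≤ q) :
    domNum (Gnet q 1) = q + 1 ∧
    ∀ D : Finset (GVert q 1), (D : Set (GVert q 1)) ⊆ Set.range (hub q 1) →
      D.card = q + 1 → IsDominatingSet (Gnet q 1) D ∧ D.card = domNum (Gnet q 1) := by
  have hdom : domNum (Gnet q 1) = q + 1 := by
    have := edgeCorona.domNum_top_add_one (V := Fin (q + 2)) hq
    rw [Fintype.card_fin] at this
    exact Nat.add_right_cancel this
  refine ⟨hdom, fun D hD hcard => ⟨?_, hcard.trans hdom.symm⟩⟩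
  have hright : D.toRight = ∅ := Finset.eq_empty_of_forall_notMem fun p hp => by
    obtain ⟨k, hk⟩ := hD (Finset.mem_toRight.mp hp)
    exact Sum.inl_ne_inr hk
  exact edgeCorona.isDominatingSet_top_of_toRight_eq_empty (V := Fin (q + 2)) hright
    (by rw [Fintype.card_fin]; exact (congrArg (· + 1) hcard).ge)
end

section
/- For all g ≥ 0 and q ≥ 1, the chromatic polynomial of G_q(g) is P(G_q(g), λ) = λ(λ−1) · ∏_{i=2}^{q+1} (λ−i)^{E(g,q)}, where E(g,q) = (2/(q(q+3))) · ((q+1)(q+2)/2)^{g+1} − 2/(q(q+3)). -/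
/-- The exponent `E(g,q) = (2/(q(q+3))) · ((q+1)(q+2)/2)^{g+1} − 2/(q(q+3))`,
a natural number (the division is exact). -/
def expE (q g : ℕ) : ℕ :=
  (2 * (((q + 1) * (q + 2) / 2) ^ (g + 1) - 1)) / (q * (q + 3))

/-!
A proper colouring of `G ⊛ K_q` is a proper colouring of `G` together with, for every edge `uv`
of `G`, an injective colouring of the attached `K_q` avoiding the two distinct colours of `u` and
`v`. Hence `P(G ⊛ K_q, λ) = P(G, λ) · ((λ-2)(λ-3)⋯(λ-q-1))^{|E(G)|}`. By the handshake lemma the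
corona multiplies the number of edges by `C(q+2, 2)`, so `|E(G_q(g))| = C(q+2, 2)^{g+1}`; starting
from `P(K_{q+2}, λ) = λ(λ-1) · (λ-2)⋯(λ-q-1)` the exponent of `(λ-2)⋯(λ-q-1)` therefore grows to
the geometric sum `∑_{i ≤ g} C(q+2, 2)^i`, which is `E(g,q)` because `q(q+3) = 2 (C(q+2, 2) - 1)`.
-/

open Finset

theorem Nat.add_one_mul_self_eq_choose_two_mul_two (n : ℕ) :
    (n + 1) * n = (n + 1).choose 2 * 2 := by
  simpa using Nat.add_one_mul_choose_eq n 1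

namespace SimpleGraph

variable {V α : Type*}

def topColoringEquivEmbedding : (⊤ : SimpleGraph V).Coloring α ≃ (V ↪ α) where
  toFun C := ⟨C, fun _ _ h => by_contra fun hne => C.valid hne h⟩
  invFun f := Coloring.mk f fun h => f.injective.ne h
  left_inv _ := rfl
  right_inv _ := rfl

theorem card_top_coloring [Finite V] [Finite α] :
    Nat.card ((⊤ : SimpleGraph V).Coloring α) = (Nat.card α).descFactorial (Nat.card V) := by
  have := Fintype.ofFinite V
  have := Fintype.ofFinite α
  rw [Nat.card_congr topColoringEquivEmbedding, Nat.card_eq_fintype_card,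
    Fintype.card_embedding_eq, Nat.card_eq_fintype_card, Nat.card_eq_fintype_card]

theorem card_mem_edge {G : SimpleGraph V} (e : G.edgeSet) :
    Nat.card {u : V // u ∈ (e : Sym2 V)} = 2 := by
  classical
  rw [← Sym2.card_toFinset_of_not_isDiag _ (G.not_isDiag_of_mem_edgeSet e.2),
    ← Nat.card_eq_finsetCard]
  simp only [Sym2.mem_toFinset]

theorem Coloring.card_avoiding_edge [Finite α] {G : SimpleGraph V} (C : G.Coloring α)
    (e : G.edgeSet) : Nat.card {x : α // ∀ v ∈ (e : Sym2 V), x ≠ C v} = Nat.card α - 2 := by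
  classical
  have := Fintype.ofFinite α
  have hdiag : ¬ ((e : Sym2 V).map C).IsDiag := by
    obtain ⟨e, he⟩ := e
    induction e using Sym2.ind with
    | _ a b => simpa using C.valid he
  have hcompl : {x : α // ∀ v ∈ (e : Sym2 V), x ≠ C v} ≃
      {x : α // x ∉ ((e : Sym2 V).map C).toFinset} :=
    Equiv.subtypeEquivRight fun x => by simp [Sym2.mem_map, eq_comm]
  rw [Nat.card_congr hcompl, Nat.card_eq_fintype_card, Fintype.card_subtype_compl,
    Fintype.card_coe, Sym2.card_toFinset_of_not_isDiag _ hdiag, Nat.card_eq_fintype_card]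

theorem sum_card_neighborSet_eq_two_mul_card_edgeSet [Fintype V] (G : SimpleGraph V) :
    ∑ v, Nat.card (G.neighborSet v) = 2 * Nat.card G.edgeSet := by
  classical
  simp only [Nat.card_eq_fintype_card, card_neighborSet_eq_degree, sum_degrees_eq_twice_card_edges,
    edgeFinset_card]

end SimpleGraph

section EdgeCorona

variable {V : Type} (G : SimpleGraph V) (q : ℕ) {α : Type*}

def edgeCoronaColoringEquiv :
    (edgeCorona G q).Coloring α ≃
      Σ C : G.Coloring α, Π e : G.edgeSet, (Fin q ↪ {x : α // ∀ v ∈ (e : Sym2 V), x ≠ C v}) where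
  toFun C :=
    ⟨.mk (C ∘ Sum.inl) fun h => C.valid (show (edgeCorona G q).Adj (.inl _) (.inl _) from h),
     fun e => ⟨fun j => ⟨C (.inr (e, j)), fun _ hv =>
        C.valid (show (edgeCorona G q).Adj (.inr (e, j)) (.inl _) from hv)⟩,
      fun j k hjk => by_contra fun hne =>
        C.valid (show (edgeCorona G q).Adj (.inr (e, j)) (.inr (e, k)) from ⟨rfl, hne⟩)
          (congrArg Subtype.val hjk)⟩⟩
  invFun P := .mk (Sum.elim P.1 fun p => (P.2 p.1 p.2).1) <| by
    rintro (u | ⟨e, j⟩) (v | ⟨e', k⟩) h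
    · exact P.1.valid h
    · exact fun hc => (P.2 e' k).2 u h hc.symm
    · exact (P.2 e j).2 v h
    · obtain ⟨rfl, hjk⟩ := h
      exact fun hc => hjk ((P.2 e).injective (Subtype.ext hc))
  left_inv C := DFunLike.ext _ _ (by rintro (v | p) <;> rfl)
  right_inv P := rfl

theorem card_edgeCorona_coloring [Finite V] [Finite α] :
    Nat.card ((edgeCorona G q).Coloring α) =
      Nat.card (G.Coloring α) * (Nat.card α - 2).descFactorial q ^ Nat.card G.edgeSet := by
  classical
  have := Fintype.ofFinite V
  have := Fintype.ofFinite α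
  have := Fintype.ofFinite G.edgeSet
  have hfiber (C : G.Coloring α) (e : G.edgeSet) :
      Nat.card (Fin q ↪ {x : α // ∀ v ∈ (e : Sym2 V), x ≠ C v}) =
        (Nat.card α - 2).descFactorial q := by
    rw [Nat.card_eq_fintype_card, Fintype.card_embedding_eq, Fintype.card_fin,
      ← Nat.card_eq_fintype_card, C.card_avoiding_edge]
  rw [Nat.card_congr (edgeCoronaColoringEquiv G q), Nat.card_sigma]
  simp only [Nat.card_pi, hfiber, prod_const, sum_const, card_univ, smul_eq_mul,
    ← Nat.card_eq_fintype_card]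

def edgeCoronaNeighborSetInlEquiv (v : V) :
    (edgeCorona G q).neighborSet (.inl v) ≃ G.neighborSet v ⊕ (G.incidenceSet v × Fin q) where
  toFun
    | ⟨.inl u, h⟩ => .inl ⟨u, h⟩
    | ⟨.inr (e, j), h⟩ => .inr (⟨e, e.2, h⟩, j)
  invFun
    | .inl ⟨u, h⟩ => ⟨.inl u, h⟩
    | .inr (⟨e, he, h⟩, j) => ⟨.inr (⟨e, he⟩, j), h⟩
  left_inv := by rintro ⟨u | ⟨e, j⟩, h⟩ <;> rfl
  right_inv := by rintro (⟨u, h⟩ | ⟨⟨e, he, h⟩, j⟩) <;> rfl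

def edgeCoronaNeighborSetInrEquiv (p : G.edgeSet × Fin q) :
    (edgeCorona G q).neighborSet (.inr p) ≃ {u : V // u ∈ (p.1 : Sym2 V)} ⊕ {k // k ≠ p.2} where
  toFun
    | ⟨.inl u, h⟩ => .inl ⟨u, h⟩
    | ⟨.inr p, h⟩ => .inr ⟨p.2, fun hk => h.2 hk.symm⟩
  invFun
    | .inl ⟨u, h⟩ => ⟨.inl u, h⟩
    | .inr ⟨k, hk⟩ => ⟨.inr (p.1, k), rfl, fun h => hk h.symm⟩
  left_inv := by
    rintro ⟨u | ⟨e', j'⟩, h⟩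
    · rfl
    · obtain ⟨h, -⟩ := h
      cases h
      rfl
  right_inv := by rintro (⟨u, h⟩ | ⟨k, hk⟩) <;> rfl

theorem card_edgeCorona_neighborSet_inl [Finite V] (v : V) :
    Nat.card ((edgeCorona G q).neighborSet (.inl v)) = (q + 1) * Nat.card (G.neighborSet v) := by
  classical
  have := Fintype.ofFinite V
  rw [Nat.card_congr (edgeCoronaNeighborSetInlEquiv G q v), Nat.card_sum, Nat.card_prod,
    Nat.card_congr (G.incidenceSetEquivNeighborSet v), Nat.card_fin]
  ring

theorem card_edgeCorona_neighborSet_inr (p : G.edgeSet × Fin q) :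
    Nat.card ((edgeCorona G q).neighborSet (.inr p)) = q + 1 := by
  have := p.2.pos
  have : Finite {u : V // u ∈ (p.1 : Sym2 V)} :=
    Nat.finite_of_card_ne_zero (by rw [SimpleGraph.card_mem_edge]; simp)
  rw [Nat.card_congr (edgeCoronaNeighborSetInrEquiv G q p), Nat.card_sum,
    SimpleGraph.card_mem_edge, Nat.card_eq_fintype_card, Fintype.card_subtype_compl,
    Fintype.card_subtype_eq, Fintype.card_fin]
  omega

theorem card_edgeCorona_edgeSet [Finite V] :
    Nat.card (edgeCorona G q).edgeSet = Nat.card G.edgeSet * (q + 2).choose 2 := by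
  have := Fintype.ofFinite V
  have := Fintype.ofFinite G.edgeSet
  have hdeg := (edgeCorona G q).sum_card_neighborSet_eq_two_mul_card_edgeSet
  simp only [Fintype.sum_sum_type, card_edgeCorona_neighborSet_inl,
    card_edgeCorona_neighborSet_inr, ← mul_sum, G.sum_card_neighborSet_eq_two_mul_card_edgeSet,
    sum_const, card_univ, smul_eq_mul, ← Nat.card_eq_fintype_card, Nat.card_prod,
    Nat.card_fin] at hdeg
  have hchoose : (q + 2) * (q + 1) = (q + 2).choose 2 * 2 :=
    Nat.add_one_mul_self_eq_choose_two_mul_two (q + 1)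
  nlinarith

end EdgeCorona

instance instFiniteGVert (q : ℕ) : ∀ g, Finite (GVert q g)
  | 0 => inferInstanceAs (Finite (Fin (q + 2)))
  | g + 1 =>
    have := instFiniteGVert q g
    inferInstanceAs (Finite (GVert q g ⊕ ((Gnet q g).edgeSet × Fin q)))

theorem card_Gnet_edgeSet (q g : ℕ) :
    Nat.card (Gnet q g).edgeSet = (q + 2).choose 2 ^ (g + 1) := by
  induction g with
  | zero =>
    classical
    show Nat.card (⊤ : SimpleGraph (Fin (q + 2))).edgeSet = _
    rw [zero_add, pow_one, Nat.card_eq_fintype_card, ← SimpleGraph.edgeFinset_card,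
      SimpleGraph.card_edgeFinset_top_eq_card_choose_two, Fintype.card_fin]
  | succ g ih =>
    rw [pow_succ, ← ih]
    exact card_edgeCorona_edgeSet (Gnet q g) q

theorem card_Gnet_coloring (q g : ℕ) (α : Type*) [Finite α] :
    Nat.card ((Gnet q g).Coloring α) = (Nat.card α).descFactorial 2 *
      (Nat.card α - 2).descFactorial q ^ ∑ i ∈ range (g + 1), (q + 2).choose 2 ^ i := by
  induction g with
  | zero =>
    have hsplit := Nat.descFactorial_mul_descFactorial (n := Nat.card α) (Nat.le_add_left 2 q)
    rw [Nat.add_sub_cancel] at hsplit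
    show Nat.card ((⊤ : SimpleGraph (Fin (q + 2))).Coloring α) = _
    rw [zero_add, sum_range_one, pow_zero, pow_one, mul_comm, hsplit,
      SimpleGraph.card_top_coloring, Nat.card_fin]
  | succ g ih =>
    rw [sum_range_succ, pow_add, ← mul_assoc, ← ih, ← card_Gnet_edgeSet]
    exact card_edgeCorona_coloring (Gnet q g) q

theorem expE_eq_sum_range (q g : ℕ) (hq : 1 ≤ q) :
    expE q g = ∑ i ∈ range (g + 1), (q + 2).choose 2 ^ i := by
  have hchoose : (q + 2) * (q + 1) = (q + 2).choose 2 * 2 :=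
    Nat.add_one_mul_self_eq_choose_two_mul_two (q + 1)
  have hs : (q + 1) * (q + 2) / 2 = (q + 2).choose 2 := by
    rw [mul_comm, hchoose, Nat.mul_div_cancel _ two_pos]
  have hden : q * (q + 3) = 2 * ((q + 2).choose 2 - 1) := by
    have : q * (q + 3) + 2 = (q + 2) * (q + 1) := by ring
    omega
  have htwo : 2 ≤ (q + 2).choose 2 := by nlinarith
  rw [expE, hs, hden, Nat.mul_div_mul_left _ _ two_pos, Nat.geomSum_eq htwo]

theorem cast_descFactorial_sub_two {n : ℕ} (hn : 2 ≤ n) (q : ℕ) :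
    ((n - 2).descFactorial q : ℤ) = ∏ i ∈ Icc 2 (q + 1), ((n : ℤ) - i) := by
  rw [← descPochhammer_eval_eq_descFactorial, descPochhammer_eval_eq_prod_range, Nat.cast_sub hn,
    ← Ico_add_one_right_eq_Icc, prod_Ico_eq_prod_range,
    show q + 1 + 1 - 2 = q by omega]
  refine prod_congr rfl fun i _ => ?_
  push_cast
  ring

/-- For all `g ≥ 0`, `q ≥ 1` and every number `n` of colors, the number of proper
colorings of `G_q(g)` with `n` colors is
`P(G_q(g), n) = n(n−1) · ∏_{i=2}^{q+1} (n−i)^{E(g,q)}`. -/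
theorem chromaticPolynomial_Gnet (q g : ℕ) (hq : 1 ≤ q) (n : ℕ) :
    (Nat.card ((Gnet q g).Coloring (Fin n)) : ℤ) =
      (n : ℤ) * ((n : ℤ) - 1) *
        ∏ i ∈ Finset.Icc 2 (q + 1), ((n : ℤ) - (i : ℤ)) ^ expE q g := by
  rw [card_Gnet_coloring, Nat.card_fin, ← expE_eq_sum_range q g hq]
  rcases lt_or_ge n 2 with hn | hn
  -- `n - 2` truncates here, but both sides contain the vanishing factor `n (n - 1)`.
  · interval_cases n <;> simp
  · push_cast [Nat.cast_descFactorial_two, cast_descFactorial_sub_two hn, prod_pow]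
    rfl
end

section
/- For all g ≥ 0 and q ≥ 1, the chromatic number of G_q(g) equals q+2. -/
open Finset SimpleGraph

lemma SimpleGraph.Coloring.card_notMem_map_edge {V : Type} {G : SimpleGraph V} {α : Type*}
    [Fintype α] [DecidableEq α] (c : G.Coloring α) (e : G.edgeSet) :
    Fintype.card {a // a ∉ Sym2.map c e} = Fintype.card α - 2 := by
  obtain ⟨e, he⟩ := e
  induction e with
  | _ u v =>
    have hne : c u ≠ c v := c.valid he
    have hpair : univ.filter (· ∈ Sym2.map c s(u, v)) = {c u, c v} := by
      ext a; simp [Sym2.mem_iff]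
    rw [Fintype.card_subtype_compl, Fintype.card_subtype, hpair, card_pair hne]

namespace edgeCorona

variable {V : Type} {G : SimpleGraph V} {q : ℕ}

def inlEmbedding (G : SimpleGraph V) (q : ℕ) : G ↪g edgeCorona G q where
  toFun := Sum.inl
  inj' := Sum.inl_injective
  map_rel_iff' := Iff.rfl

def coloringOfEmbeddings {α : Type*} (c : G.Coloring α)
    (f : ∀ e : G.edgeSet, Fin q ↪ {a // a ∉ Sym2.map c e}) : (edgeCorona G q).Coloring α :=
  Coloring.mk (Sum.elim c fun p => f p.1 p.2) <| by
    rintro (u | ⟨e, i⟩) (v | ⟨e', j⟩) h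
    · exact c.valid h
    · exact fun (hcol : c u = f e' j) => (f e' j).2 (hcol ▸ Sym2.mem_map.2 ⟨u, h, rfl⟩)
    · exact fun (hcol : (f e i : α) = c v) => (f e i).2 (hcol ▸ Sym2.mem_map.2 ⟨v, h, rfl⟩)
    · obtain ⟨rfl, hij⟩ := h
      exact fun hcol => hij ((f e).injective (Subtype.ext hcol))

theorem colorable {n : ℕ} (hG : G.Colorable n) (hn : q + 2 ≤ n) :
    (edgeCorona G q).Colorable n := by
  obtain ⟨c⟩ := hG
  have hemb (e : G.edgeSet) : Nonempty (Fin q ↪ {a // a ∉ Sym2.map c e}) :=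
    Function.Embedding.nonempty_of_card_le <| by
      rw [c.card_notMem_map_edge, Fintype.card_fin, Fintype.card_fin]
      omega
  exact ⟨coloringOfEmbeddings c fun e => (hemb e).some⟩

end edgeCorona

def topEmbeddingGnet (q : ℕ) : (g : ℕ) → (⊤ : SimpleGraph (Fin (q + 2))) ↪g Gnet q g
  | 0 => Embedding.refl
  | g + 1 => (edgeCorona.inlEmbedding (Gnet q g) q).comp (topEmbeddingGnet q g)

theorem colorable_Gnet (q g : ℕ) : (Gnet q g).Colorable (q + 2) := by
  induction g with
  | zero => exact Fintype.card_fin (q + 2) ▸ (⊤ : SimpleGraph (Fin (q + 2))).colorable_of_fintype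
  | succ g ih => exact edgeCorona.colorable ih le_rfl

theorem chromaticNumber_Gnet_general (q g : ℕ) :
    (Gnet q g).chromaticNumber = (q + 2 : ℕ) := by
  refine le_antisymm (colorable_Gnet q g).chromaticNumber_le ?_
  simpa using chromaticNumber_mono_of_hom (topEmbeddingGnet q g).toHom

/-- For all `g ≥ 0`, `q ≥ 1`, the chromatic number of `G_q(g)` is `q+2`. -/
theorem chromaticNumber_Gnet (q g : ℕ) (hq : 1 ≤ q) :
    (Gnet q g).chromaticNumber = (q + 2 : ℕ) :=
  chromaticNumber_Gnet_general q g
end
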